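/- Let B be an infinite set of positive integers. Then m_H(int(W)) = sup over finite S ⊆ B of the natural density d(F_{A_S}) (which exists since F_{A_S} is invariant under translation by lcm(S)), and this supremum is at most the lower density of E. -/

import Mathlib

/-!
A point `h ∈ H` lies in `int W` iff some cylinder `U_S(h)` (fixing the coordinates in a finite
`S ⊆ B`) lies in `W`. Every such cylinder is `U_S(Δ n)` for some `n`, and `U_S(Δ n) ⊆ W` iff
`n ∈ F_{A_S}`: by Bézout, `gcd(b, lcm S) ∣ n` iff some multiple of `b` is `≡ n (mod lcm S)`.
The `lcm S` cylinders `U_S(Δ 1), …, U_S(Δ (lcm S))` partition `H` and have equal Haar measure by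
translation invariance, so the part of `int W` seen at level `S` has measure the proportion of
residues mod `lcm S` lying in `F_{A_S}`, which is the density of this `lcm S`-periodic set.
Finally `int W` is the directed union of these parts, and `F_{A_S} ⊆ E`.
-/

open Set MeasureTheory Filter Topology

namespace BFree

/-- The ambient compact group `∏_{b ∈ B} ℤ/bℤ`. -/
abbrev Gspace (B : Set ℕ+) : Type := ∀ b : B, ZMod ((b : ℕ+) : ℕ)

/-- The diagonal embedding `Δ : ℤ → ∏_{b ∈ B} ℤ/bℤ`. -/
def delta (B : Set ℕ+) : ℤ →+ Gspace B where
  toFun n := fun b => (n : ZMod ((b : ℕ+) : ℕ))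
  map_zero' := by funext b; simp
  map_add' m n := by funext b; simp

/-- `H`, the closure of `Δ(ℤ)`, as a (closed) subgroup of `Gspace B`. -/
def Hgrp (B : Set ℕ+) : AddSubgroup (Gspace B) :=
  (delta B).range.topologicalClosure

/-- `H` as a compact topological group. -/
abbrev Hspace (B : Set ℕ+) : Type := ↥(Hgrp B)

instance (B : Set ℕ+) : CompactSpace (Hspace B) :=
  isCompact_iff_compactSpace.mp
    (IsClosed.isCompact (AddSubgroup.isClosed_topologicalClosure _))

instance (B : Set ℕ+) : BorelSpace (Hspace B) := Subtype.borelSpace _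

/-- The window `W = {h ∈ H : h_b ≠ 0 for all b ∈ B}`. -/
def window (B : Set ℕ+) : Set (Hspace B) :=
  {h | ∀ b : B, (h : Gspace B) b ≠ 0}

/-- `Δ(n)` as an element of `H`. -/
def deltaH (B : Set ℕ+) (n : ℤ) : Hspace B :=
  ⟨delta B n, (delta B).range.le_topologicalClosure ⟨n, rfl⟩⟩

/-- The set of multiples `M_B ⊆ ℤ` of a set `B` of positive integers. -/
def MultSet (B : Set ℕ+) : Set ℤ := {n | ∃ b ∈ B, ((b : ℕ) : ℤ) ∣ n}

/-- The `B`-free set `F_B = ℤ ∖ M_B`. -/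
def FreeSet (B : Set ℕ+) : Set ℤ := {n | ∀ b ∈ B, ¬ ((b : ℕ) : ℤ) ∣ n}

/-- Set of multiples of a set of natural numbers. -/
def MultSetN (C : Set ℕ) : Set ℤ := {n | ∃ c ∈ C, (c : ℤ) ∣ n}

/-- Free set of a set of natural numbers. -/
def FreeSetN (C : Set ℕ) : Set ℤ := {n | ∀ c ∈ C, ¬ (c : ℤ) ∣ n}

/-- `#(M ∩ [1, N]) / N`. -/
noncomputable def densSeq (M : Set ℤ) (N : ℕ) : ℝ :=
  (Nat.card ↥(M ∩ Set.Icc (1 : ℤ) (N : ℤ)) : ℝ) / N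

/-- Lower (asymptotic) density of a set of integers. -/
noncomputable def lowerDensity (M : Set ℤ) : ℝ := Filter.liminf (densSeq M) Filter.atTop

/-- Upper (asymptotic) density of a set of integers. -/
noncomputable def upperDensity (M : Set ℤ) : ℝ := Filter.limsup (densSeq M) Filter.atTop

/-- `B` is taut if removing any element strictly decreases the lower density
of the set of multiples. -/
def Taut (B : Set ℕ+) : Prop :=
  ∀ b ∈ B, lowerDensity (MultSet (B \ {b})) < lowerDensity (MultSet B)

/-- `B` is primitive if no element divides another. -/
def Primitive (B : Set ℕ+) : Prop :=
  ∀ b ∈ B, ∀ b' ∈ B, (b : ℕ) ∣ (b' : ℕ) → b = b'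

/-- `lcm(S)` for a finite set of positive integers. -/
def lcmS (S : Finset ℕ+) : ℕ := S.lcm fun b => (b : ℕ)

/-- `A_S = {gcd(b, lcm S) : b ∈ B}`. -/
def ASet (B : Set ℕ+) (S : Finset ℕ+) : Set ℕ :=
  {m | ∃ b ∈ B, m = Nat.gcd (b : ℕ) (lcmS S)}

/-- The cylinder set `U_S(h) ⊆ H`. -/
def cyl (B : Set ℕ+) (S : Finset ℕ+) (hS : ↑S ⊆ B) (h : Hspace B) : Set (Hspace B) :=
  {h' | ∀ b, ∀ hb : b ∈ S, (h' : Gspace B) ⟨b, hS hb⟩ = (h : Gspace B) ⟨b, hS hb⟩}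

/-- `E = ⋃_{S ⊆ B finite} F_{A_S}`. -/
def Eset (B : Set ℕ+) : Set ℤ :=
  ⋃ (S : Finset ℕ+) (_ : ↑S ⊆ B), FreeSetN (ASet B S)

/-- `A_∞`. -/
def Ainfty (B : Set ℕ+) : Set ℕ :=
  {n | ∀ S : Finset ℕ+, ↑S ⊆ B →
    ∃ S' : Finset ℕ+, S ⊆ S' ∧ ↑S' ⊆ B ∧ n ∈ ASet B S' ∧ ∀ b ∈ S', (b : ℕ) ≠ n}

/-- The indicator `η` of the `B`-free set, as a point of `{0,1}^ℤ`. -/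
noncomputable def eta (B : Set ℕ+) : ℤ → Bool :=
  fun n => @decide (n ∈ FreeSet B) (Classical.propDecidable _)

/-- The left shift on `{0,1}^ℤ`, iterated `k` times (`k ∈ ℤ`). -/
def shift (k : ℤ) (x : ℤ → Bool) : ℤ → Bool := fun n => x (n + k)

/-- The orbit closure `X_η` of `η` in `{0,1}^ℤ`. -/
noncomputable def Xeta (B : Set ℕ+) : Set (ℤ → Bool) :=
  closure {x | ∃ k : ℤ, x = shift k (eta B)}

open Function
open scoped ENNReal

theorem _root_.Nat.count_add_of_periodic {p : ℕ → Prop} [DecidablePred p] {L : ℕ}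
    (hp : Periodic p L) (N : ℕ) : Nat.count p (N + L) = Nat.count p N + Nat.count p L := by
  have hshift : (fun k => p (L + k)) = p := funext fun k => by rw [add_comm]; exact hp k
  rw [add_comm N, Nat.count_add]
  simp only [hshift]
  exact add_comm _ _

theorem _root_.Nat.tendsto_count_div_of_periodic {p : ℕ → Prop} [DecidablePred p] {L : ℕ}
    (hL : 0 < L) (hp : Periodic p L) :
    Tendsto (fun N : ℕ => (Nat.count p N : ℝ) / N) atTop (𝓝 ((Nat.count p L : ℝ) / L)) := by
  set err : ℕ → ℝ := fun N => Nat.count p N - N * (Nat.count p L / L) with herr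
  have err_periodic : Periodic err L := fun N => by
    simp only [herr, Nat.count_add_of_periodic hp]
    push_cast
    field_simp
    ring
  set C := ∑ k ∈ Finset.range L, |err k|
  have err_bdd : ∀ N, ‖err N‖ ≤ C := fun N => by
    rw [← err_periodic.map_mod_nat, Real.norm_eq_abs]
    exact Finset.single_le_sum (f := fun k => |err k|) (fun _ _ => abs_nonneg _)
      (Finset.mem_range.2 (Nat.mod_lt N hL))
  have err_div : Tendsto (fun N : ℕ => (N : ℝ)⁻¹ * err N) atTop (𝓝 0) :=
    tendsto_inv_atTop_zero.comp tendsto_natCast_atTop_atTop |>.zero_mul_isBoundedUnder_le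
      (isBoundedUnder_of ⟨C, err_bdd⟩)
  have hsplit : ∀ᶠ N : ℕ in atTop,
      (Nat.count p L : ℝ) / L + (N : ℝ)⁻¹ * err N = Nat.count p N / N := by
    filter_upwards [eventually_ne_atTop 0] with N hN
    simp only [herr]
    field_simp
    ring
  simpa using (tendsto_const_nhds.add err_div).congr' hsplit

open Classical in
theorem densSeq_eq_count (M : Set ℤ) (N : ℕ) :
    densSeq M N = Nat.count (fun k : ℕ => (k : ℤ) + 1 ∈ M) N / N := by
  have hset : M ∩ Icc 1 (N : ℤ) =
      (fun k : ℕ => (k : ℤ) + 1) '' ((Finset.range N).filter (fun k : ℕ => (k : ℤ) + 1 ∈ M) :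
        Set ℕ) := by
    ext n
    simp only [mem_inter_iff, mem_Icc, Finset.coe_filter, Finset.mem_range, mem_image]
    constructor
    · rintro ⟨hn, h1, hN⟩
      exact ⟨(n - 1).toNat, ⟨by omega, by rwa [Int.toNat_of_nonneg (by omega), sub_add_cancel]⟩,
        by omega⟩
    · rintro ⟨k, ⟨hk, hkM⟩, rfl⟩
      exact ⟨hkM, by omega, by omega⟩
  rw [densSeq, hset, Nat.card_image_of_injective (fun a b h => by simpa using h),
    Nat.card_coe_set_eq, Set.ncard_coe_finset, Nat.count_eq_card_filter_range]

theorem densSeq_nonneg (M : Set ℤ) (N : ℕ) : 0 ≤ densSeq M N := by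
  unfold densSeq; positivity

open Classical in
theorem densSeq_le_one (M : Set ℤ) (N : ℕ) : densSeq M N ≤ 1 := by
  rw [densSeq_eq_count]
  exact div_le_one_of_le₀ (by exact_mod_cast Nat.count_le _) (Nat.cast_nonneg _)

open Classical in
theorem densSeq_mono {M M' : Set ℤ} (h : M ⊆ M') (N : ℕ) : densSeq M N ≤ densSeq M' N := by
  rw [densSeq_eq_count, densSeq_eq_count]
  gcongr

theorem lowerDensity_mono {M M' : Set ℤ} (h : M ⊆ M') : lowerDensity M ≤ lowerDensity M' :=
  liminf_le_liminf (.of_forall (densSeq_mono h)) (isBoundedUnder_of ⟨0, densSeq_nonneg M⟩)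
    (isBoundedUnder_of ⟨1, densSeq_le_one M'⟩).isCoboundedUnder_ge

open Classical in
theorem tendsto_densSeq_of_periodic {M : Set ℤ} {L : ℕ} (hL : 0 < L)
    (hM : ∀ n : ℤ, n + L ∈ M ↔ n ∈ M) :
    Tendsto (densSeq M) atTop
      (𝓝 ((Nat.count (fun k : ℕ => (k : ℤ) + 1 ∈ M) L : ℝ) / L)) := by
  have hp : Periodic (fun k : ℕ => (k : ℤ) + 1 ∈ M) L := fun k => by
    simpa only [Nat.cast_add, add_right_comm] using propext (hM ((k : ℤ) + 1))
  rw [funext (densSeq_eq_count M)]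
  exact Nat.tendsto_count_div_of_periodic hL hp

theorem lcmS_pos (S : Finset ℕ+) : 0 < lcmS S :=
  Nat.pos_of_ne_zero fun h => by
    obtain ⟨b, -, hb⟩ := Finset.lcm_eq_zero_iff.1 h
    exact b.ne_zero hb

theorem intCast_lcmS_dvd_iff {S : Finset ℕ+} {x : ℤ} :
    (lcmS S : ℤ) ∣ x ↔ ∀ b ∈ S, ((b : ℕ) : ℤ) ∣ x := by
  simp only [Int.natCast_dvd, lcmS, Finset.lcm_dvd_iff]

theorem add_lcmS_mem_freeSetN_ASet_iff (B : Set ℕ+) (S : Finset ℕ+) (n : ℤ) :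
    n + lcmS S ∈ FreeSetN (ASet B S) ↔ n ∈ FreeSetN (ASet B S) := by
  have hdvd : ∀ a ∈ ASet B S, (a : ℤ) ∣ lcmS S := by
    rintro a ⟨b, -, rfl⟩
    exact Int.natCast_dvd_natCast.2 (Nat.gcd_dvd_right _ _)
  exact forall₂_congr fun a ha => not_congr (dvd_add_left (hdvd a ha))

def innerWindow (B : Set ℕ+) (S : Finset ℕ+) (hS : ↑S ⊆ B) : Set (Hspace B) :=
  {h | cyl B S hS h ⊆ window B}

section Cylinder

variable {B : Set ℕ+} {S : Finset ℕ+} (hS : ↑S ⊆ B)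

@[simp]
theorem deltaH_apply (n : ℤ) (b : B) : (deltaH B n : Gspace B) b = n := rfl

theorem mem_cyl_self (h : Hspace B) : h ∈ cyl B S hS h := fun _ _ => rfl

theorem cyl_eq_of_mem {h h' : Hspace B} (hh' : h' ∈ cyl B S hS h) :
    cyl B S hS h' = cyl B S hS h := by
  ext g
  exact forall₂_congr fun b hb => by rw [hh' b hb]

theorem cyl_subset_of_subset {S' : Finset ℕ+} (hSS' : S ⊆ S') (hS' : ↑S' ⊆ B) (h : Hspace B) :
    cyl B S' hS' h ⊆ cyl B S hS h :=
  fun _ hg b hb => hg b (hSS' hb)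

theorem isOpen_cyl (h : Hspace B) : IsOpen (cyl B S hS h) := by
  have : cyl B S hS h = ⋂ b : S, (fun g : Hspace B => (g : Gspace B) ⟨b, hS b.2⟩) ⁻¹'
      {(h : Gspace B) ⟨b, hS b.2⟩} := by
    ext g
    simp only [cyl, mem_iInter, mem_preimage, mem_singleton_iff, Subtype.forall]
    rfl
  rw [this]
  exact isOpen_iInter_of_finite fun b =>
    (isOpen_discrete _).preimage ((continuous_apply _).comp continuous_subtype_val)

omit hS in
theorem exists_cyl_subset_of_mem_nhds {h : Hspace B} {U : Set (Hspace B)} (hU : U ∈ 𝓝 h) :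
    ∃ (S : Finset ℕ+) (hS : ↑S ⊆ B), cyl B S hS h ⊆ U := by
  obtain ⟨u, hu, huU⟩ := (mem_nhds_subtype _ _ _).1 hU
  rw [nhds_pi, Filter.mem_pi] at hu
  obtain ⟨I, hI, t, ht, hIt⟩ := hu
  have hSB : ↑(hI.toFinset.image Subtype.val) ⊆ B := by
    intro b hb
    obtain ⟨b', -, rfl⟩ := Finset.mem_image.1 hb
    exact b'.2
  refine ⟨_, hSB, fun g hg => huU (hIt ?_)⟩
  intro b hb
  have := hg b (Finset.mem_image_of_mem _ (hI.mem_toFinset.2 hb))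
  simp only at this
  rw [this]
  exact mem_of_mem_nhds (ht b)

omit hS in
theorem denseRange_deltaH : DenseRange (deltaH B) := by
  rw [DenseRange, Subtype.dense_iff, ← range_comp]
  exact subset_rfl

theorem exists_mem_cyl_deltaH (h : Hspace B) : ∃ n : ℤ, h ∈ cyl B S hS (deltaH B n) := by
  obtain ⟨n, hn⟩ := denseRange_deltaH.exists_mem_open (isOpen_cyl hS h) ⟨h, mem_cyl_self hS h⟩
  exact ⟨n, cyl_eq_of_mem hS hn ▸ mem_cyl_self hS h⟩

theorem deltaH_mem_cyl_deltaH_iff {m n : ℤ} :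
    deltaH B m ∈ cyl B S hS (deltaH B n) ↔ (lcmS S : ℤ) ∣ m - n := by
  rw [intCast_lcmS_dvd_iff]
  exact forall₂_congr fun b hb => by
    rw [deltaH_apply, deltaH_apply, eq_comm, ZMod.intCast_eq_intCast_iff_dvd_sub]

theorem cyl_deltaH_subset_window_iff (n : ℤ) :
    cyl B S hS (deltaH B n) ⊆ window B ↔ n ∈ FreeSetN (ASet B S) := by
  constructor
  · rintro hW _ ⟨b, hb, rfl⟩ ⟨t, ht⟩
    -- Bézout, with `L = lcm S`: `b x + L y = gcd b L ∣ n`, so `b x t` is a multiple of `b`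
    -- congruent to `n` mod `L`
    set x := Nat.gcdA b (lcmS S)
    set y := Nat.gcdB b (lcmS S)
    have hmem : deltaH B (b * x * t) ∈ cyl B S hS (deltaH B n) := by
      refine (deltaH_mem_cyl_deltaH_iff hS).2 ⟨-(y * t), ?_⟩
      rw [ht, Nat.gcd_eq_gcd_ab]
      ring
    refine hW hmem ⟨b, hb⟩ ?_
    rw [deltaH_apply, ZMod.intCast_zmod_eq_zero_iff_dvd]
    exact ⟨x * t, by ring⟩
  · rintro hn g hg ⟨b, hb⟩ hgb
    have hS' : ↑(insert b S) ⊆ B := by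
      rw [Finset.coe_insert]
      exact insert_subset hb hS
    obtain ⟨m, hm⟩ := exists_mem_cyl_deltaH hS' g
    have hbm : ((b : ℕ) : ℤ) ∣ m := by
      rw [← ZMod.intCast_zmod_eq_zero_iff_dvd, ← deltaH_apply m ⟨b, hb⟩, ← hm b (by simp)]
      exact hgb
    have hmS : g ∈ cyl B S hS (deltaH B m) :=
      cyl_subset_of_subset hS (Finset.subset_insert b S) hS' _ hm
    have hLm : (lcmS S : ℤ) ∣ m - n := by
      rw [← deltaH_mem_cyl_deltaH_iff hS, ← cyl_eq_of_mem hS hg, cyl_eq_of_mem hS hmS]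
      exact mem_cyl_self hS _
    refine hn _ ⟨b, hb, rfl⟩ ?_
    have hgm := (Int.natCast_dvd_natCast.2 (Nat.gcd_dvd_left b (lcmS S))).trans hbm
    have hgmn := (Int.natCast_dvd_natCast.2 (Nat.gcd_dvd_right b (lcmS S))).trans hLm
    simpa using dvd_sub hgm hgmn

theorem preimage_add_deltaH_cyl_deltaH (k n : ℤ) :
    (deltaH B k + ·) ⁻¹' cyl B S hS (deltaH B n) = cyl B S hS (deltaH B (n - k)) := by
  ext g
  refine forall₂_congr fun b hb => ?_
  simp only [AddSubgroup.coe_add, Pi.add_apply, deltaH_apply, Int.cast_sub]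
  exact ⟨fun h => by rw [← h]; ring, fun h => by rw [h]; ring⟩

theorem exists_lt_lcmS_mem_cyl (h : Hspace B) :
    ∃ j < lcmS S, h ∈ cyl B S hS (deltaH B (j + 1)) := by
  obtain ⟨n, hn⟩ := exists_mem_cyl_deltaH hS h
  have hL : (0 : ℤ) < lcmS S := by exact_mod_cast lcmS_pos S
  set r := (n - 1) % (lcmS S : ℤ) with hr_def
  have hr : 0 ≤ r := Int.emod_nonneg _ hL.ne'
  refine ⟨r.toNat, by have := Int.emod_lt_of_pos (n - 1) hL; omega, ?_⟩
  have hnj : deltaH B n ∈ cyl B S hS (deltaH B (r.toNat + 1)) := by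
    refine (deltaH_mem_cyl_deltaH_iff hS).2 ⟨(n - 1) / lcmS S, ?_⟩
    rw [Int.toNat_of_nonneg hr, hr_def, Int.emod_def]
    ring
  exact cyl_eq_of_mem hS hnj ▸ hn

theorem pairwiseDisjoint_cyl_deltaH :
    (Finset.range (lcmS S) : Set ℕ).PairwiseDisjoint
      fun j : ℕ => cyl B S hS (deltaH B (j + 1)) := by
  intro i hi j hj hij
  refine disjoint_left.2 fun g hgi hgj => hij ?_
  have hL : (lcmS S : ℤ) ∣ ((i : ℤ) + 1) - ((j : ℤ) + 1) := by
    rw [← deltaH_mem_cyl_deltaH_iff hS, ← cyl_eq_of_mem hS hgj, cyl_eq_of_mem hS hgi]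
    exact mem_cyl_self hS _
  simp only [Finset.coe_range, mem_Iio] at hi hj
  have := Int.eq_zero_of_abs_lt_dvd hL (abs_lt.2 ⟨by omega, by omega⟩)
  omega

theorem measure_cyl_deltaH (μ : Measure (Hspace B)) [IsProbabilityMeasure μ]
    [μ.IsAddLeftInvariant] (n : ℤ) :
    μ (cyl B S hS (deltaH B n)) = (lcmS S : ℝ≥0∞)⁻¹ := by
  have hconst (k : ℤ) : μ (cyl B S hS (deltaH B k)) = μ (cyl B S hS (deltaH B n)) := by
    have := preimage_add_deltaH_cyl_deltaH hS (n - k) n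
    rw [sub_sub_cancel] at this
    rw [← this, measure_preimage_add]
  have hcover : (⋃ j ∈ Finset.range (lcmS S), cyl B S hS (deltaH B (j + 1))) = univ :=
    eq_univ_of_forall fun h => by
      obtain ⟨j, hj, hh⟩ := exists_lt_lcmS_mem_cyl hS h
      exact mem_biUnion (Finset.mem_range.2 hj) hh
  have hsum := measure_biUnion_finset (μ := μ) (pairwiseDisjoint_cyl_deltaH hS)
    fun j _ => (isOpen_cyl hS _).measurableSet
  simp only [hcover, measure_univ, hconst, Finset.sum_const, Finset.card_range,
    nsmul_eq_mul] at hsum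
  exact ENNReal.eq_inv_of_mul_eq_one_left (by rw [mul_comm, hsum])

theorem isOpen_innerWindow : IsOpen (innerWindow B S hS) :=
  isOpen_iff_forall_mem_open.2 fun h hh =>
    ⟨cyl B S hS h, fun _ hg => (cyl_eq_of_mem hS hg).subset.trans hh, isOpen_cyl hS h,
      mem_cyl_self hS h⟩

theorem innerWindow_subset_interior_window : innerWindow B S hS ⊆ interior (window B) :=
  interior_maximal (fun h hh => hh (mem_cyl_self hS h)) (isOpen_innerWindow hS)

theorem innerWindow_mono {S' : Finset ℕ+} (hSS' : S ⊆ S') (hS' : ↑S' ⊆ B) :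
    innerWindow B S hS ⊆ innerWindow B S' hS' :=
  fun h hh => (cyl_subset_of_subset hS hSS' hS' h).trans hh

omit hS in
theorem interior_window_eq_iUnion_innerWindow :
    interior (window B) = ⋃ S : {S : Finset ℕ+ // ↑S ⊆ B}, innerWindow B S.1 S.2 := by
  refine subset_antisymm (fun h hh => ?_)
    (iUnion_subset fun S => innerWindow_subset_interior_window S.2)
  obtain ⟨S, hS, hSW⟩ := exists_cyl_subset_of_mem_nhds (mem_interior_iff_mem_nhds.1 hh)
  exact mem_iUnion.2 ⟨⟨S, hS⟩, hSW⟩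

open Classical in
theorem innerWindow_eq_biUnion :
    innerWindow B S hS = ⋃ j ∈ (Finset.range (lcmS S)).filter
      (fun j : ℕ => (j : ℤ) + 1 ∈ FreeSetN (ASet B S)), cyl B S hS (deltaH B (j + 1)) := by
  ext h
  simp only [mem_iUnion, Finset.mem_filter, Finset.mem_range, exists_prop]
  constructor
  · intro hW
    obtain ⟨j, hj, hh⟩ := exists_lt_lcmS_mem_cyl hS h
    refine ⟨j, ⟨hj, (cyl_deltaH_subset_window_iff hS _).1 ?_⟩, hh⟩
    rwa [← cyl_eq_of_mem hS hh]
  · rintro ⟨j, ⟨-, hj⟩, hh⟩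
    change cyl B S hS h ⊆ window B
    rw [cyl_eq_of_mem hS hh]
    exact (cyl_deltaH_subset_window_iff hS _).2 hj

open Classical in
theorem measure_innerWindow (μ : Measure (Hspace B)) [IsProbabilityMeasure μ]
    [μ.IsAddLeftInvariant] :
    μ (innerWindow B S hS) =
      Nat.count (fun j : ℕ => (j : ℤ) + 1 ∈ FreeSetN (ASet B S)) (lcmS S) / lcmS S := by
  have hdisj := (pairwiseDisjoint_cyl_deltaH hS).subset
    (Finset.coe_subset.2 (Finset.filter_subset (fun j : ℕ => (j : ℤ) + 1 ∈ FreeSetN (ASet B S))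
      (Finset.range (lcmS S))))
  rw [innerWindow_eq_biUnion, measure_biUnion_finset hdisj
    fun j _ => (isOpen_cyl hS _).measurableSet]
  simp only [measure_cyl_deltaH hS μ, Finset.sum_const, nsmul_eq_mul,
    Nat.count_eq_card_filter_range, div_eq_mul_inv]

end Cylinder

theorem statement10_general (B : Set ℕ+)
    (μ : Measure (Hspace B)) [IsProbabilityMeasure μ] [μ.IsAddHaarMeasure] :
    (∀ S : Finset ℕ+, ↑S ⊆ B →
        Filter.Tendsto (densSeq (FreeSetN (ASet B S))) Filter.atTop
          (nhds (lowerDensity (FreeSetN (ASet B S))))) ∧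
    (μ (interior (window B))).toReal =
      (⨆ S : {S : Finset ℕ+ // ↑S ⊆ B}, lowerDensity (FreeSetN (ASet B S.val))) ∧
    (⨆ S : {S : Finset ℕ+ // ↑S ⊆ B}, lowerDensity (FreeSetN (ASet B S.val))) ≤
      lowerDensity (Eset B) := by
  classical
  have hdens (S : Finset ℕ+) := tendsto_densSeq_of_periodic (lcmS_pos S)
    (add_lcmS_mem_freeSetN_ASet_iff B S)
  have hlower (S : Finset ℕ+) : lowerDensity (FreeSetN (ASet B S)) = _ := (hdens S).liminf_eq
  have : Nonempty {S : Finset ℕ+ // ↑S ⊆ B} := ⟨⟨∅, Finset.coe_empty (α := ℕ+) ▸ empty_subset B⟩⟩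
  refine ⟨fun S _ => hlower S ▸ hdens S, ?_,
    ciSup_le fun S => lowerDensity_mono fun n hn => mem_iUnion₂.2 ⟨S.1, S.2, hn⟩⟩
  have hdir : Directed (· ⊆ ·) fun S : {S : Finset ℕ+ // ↑S ⊆ B} => innerWindow B S.1 S.2 :=
    fun S T => ⟨⟨S.1 ∪ T.1, Finset.coe_union S.1 T.1 ▸ union_subset S.2 T.2⟩,
      innerWindow_mono S.2 Finset.subset_union_left _,
      innerWindow_mono T.2 Finset.subset_union_right _⟩
  rw [interior_window_eq_iUnion_innerWindow, hdir.measure_iUnion,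
    ENNReal.toReal_iSup fun _ => measure_ne_top _ _]
  refine iSup_congr fun S => ?_
  rw [measure_innerWindow, hlower, ENNReal.toReal_div]
  norm_num

/-- `m_H(int W)` equals the supremum over finite `S ⊆ B` of the natural
density `d(F_{A_S})` (which exists), and this supremum is at most the lower density of `E`. -/
theorem statement10 (B : Set ℕ+) (hB : B.Infinite)
    (μ : Measure (Hspace B)) [IsProbabilityMeasure μ] [μ.IsAddHaarMeasure] :
    (∀ S : Finset ℕ+, ↑S ⊆ B →
        Filter.Tendsto (densSeq (FreeSetN (ASet B S))) Filter.atTop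
          (nhds (lowerDensity (FreeSetN (ASet B S))))) ∧
    (μ (interior (window B))).toReal =
      (⨆ S : {S : Finset ℕ+ // ↑S ⊆ B}, lowerDensity (FreeSetN (ASet B S.val))) ∧
    (⨆ S : {S : Finset ℕ+ // ↑S ⊆ B}, lowerDensity (FreeSetN (ASet B S.val))) ≤
      lowerDensity (Eset B) :=
  statement10_general B μ

end BFree
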